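/- Correctness of the LEH stopping criterion: let τ ∈ ℝ and let H_τ ⊆ ℝⁿ be a set of high cost points, i.e. f(h) ≥ τ for all h ∈ H_τ. If every point p ∈ X is within Euclidean distance Γ of some h ∈ H_τ (so no empty hypersphere of radius greater than Γ centred in X exists), then g(x) ≥ τ for every x ∈ X; in particular the optimal value of the robust problem min_{x∈X} g(x) is at least τ. -/
import Mathlib


/-- Correctness of the LEH stopping criterion: if every point of H_τ is a high cost point
(f(h) ≥ τ), and every p ∈ X is within distance Γ of some h ∈ H_τ, then the worst-case
cost g(x) = sup_{‖Δx‖ ≤ Γ} f(x + Δx) satisfies g(x) ≥ τ for every x ∈ X. -/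
theorem leh_stopping_criterion (n : ℕ) (f : EuclideanSpace ℝ (Fin n) → ℝ)
    (Γ : ℝ) (hΓ : 0 < Γ) (τ : ℝ)
    (X Hτ : Set (EuclideanSpace ℝ (Fin n)))
    (hH : ∀ h ∈ Hτ, τ ≤ f h)
    (hcover : ∀ p ∈ X, ∃ h ∈ Hτ, ‖p - h‖ ≤ Γ) :
    ∀ x ∈ X, (τ : EReal) ≤
      ⨆ Δx ∈ Metric.closedBall (0 : EuclideanSpace ℝ (Fin n)) Γ, (f (x + Δx) : EReal) := by
  intro x hx
  obtain ⟨h, hhH, hd⟩ := hcover x hx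
  have hmem : (h - x) ∈ Metric.closedBall (0 : EuclideanSpace ℝ (Fin n)) Γ := by
    simpa [norm_sub_rev] using hd
  have hle : (τ : EReal) ≤ (f (x + (h - x)) : EReal) := by
    have : x + (h - x) = h := by abel
    rw [this]
    exact_mod_cast hH h hhH
  exact hle.trans (le_iSup₂_of_le (h - x) hmem le_rfl)
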